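/- arXiv:1412.5523 — 3 statements merged into one kernel-verified Lean document; each statement's English description precedes it below -/
import Mathlib

section
/- The unordered generalized cross ratio is a complete projective invariant of unordered augmented bases: if {y_1,...,y_m} and {x_1,...,x_m} are sets of m ≥ n+2 points in general position in RP^{n-1}, then UC(y_1,...,y_m) = UC(x_1,...,x_m) if and only if there exists a projective transformation Q of RP^{n-1} with Q({y_1,...,y_m}) = {x_1,...,x_m}. -/
/-!
By the projective frame theorem, the first `n + 2` points of a family in general position can be
carried to the standard projective basis, because the last of them has no vanishing coordinate in
the basis formed by the others. So if `UC y = UC x`, the normalised family of `y` is also a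
normalised reordering of `x`, and composing the two normalisations gives a projective map carrying
`y` onto a reordering of `x`. Conversely, `UC` is invariant under reordering the points and under
projective transformations, and a projective map carrying the point set of the injective family
`y` onto that of `x` carries `y` onto a reordering of `x`.
-/

open Matrix Set
open scoped LinearAlgebra.Projectivization

/-- The standard projective basis `[e₁], …, [e_{n+1}], [e₁ + ⋯ + e_{n+1}]` of `RP^n`. -/
noncomputable def stdProjBasis (n : ℕ) : Fin (n + 2) → ℙ ℝ (Fin (n + 1) → ℝ) := fun i =>
  if h : (i : ℕ) < n + 1 then
    Projectivization.mk ℝ (Pi.single (⟨i, h⟩ : Fin (n + 1)) (1 : ℝ))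
      (by
        intro hzero
        have := congrFun hzero ⟨i, h⟩
        simp at this)
  else
    Projectivization.mk ℝ (fun _ => (1 : ℝ))
      (by
        intro hzero
        have := congrFun hzero ⟨0, Nat.succ_pos n⟩
        simp at this)

/-- The image of a point of projective space under the projective transformation
induced by a linear automorphism. -/
noncomputable def projMap {n : ℕ} (e : (Fin (n + 1) → ℝ) ≃ₗ[ℝ] (Fin (n + 1) → ℝ)) :
    ℙ ℝ (Fin (n + 1) → ℝ) → ℙ ℝ (Fin (n + 1) → ℝ) :=
  Projectivization.map (e : (Fin (n + 1) → ℝ) →ₗ[ℝ] (Fin (n + 1) → ℝ)) e.injective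

/-- A family of `m` points of `RP^n` is in general position (an augmented basis when
`m ≥ n + 3`) if any `n + 1` of its representative vectors are linearly independent,
i.e. every subset of `n + 2` of the points is a projective basis. -/
def GenPos {n m : ℕ} (y : Fin m → ℙ ℝ (Fin (n + 1) → ℝ)) : Prop :=
  ∀ s : Finset (Fin m), s.card = n + 1 →
    LinearIndependent ℝ (fun i : s => (y i).rep)

/-- The unordered generalized cross ratio of a family of `m` points of `RP^n`:
the set of all tuples obtained by reordering the points by a permutation `σ`, applying
the (unique) projective transformation carrying the first `n + 2` reordered points to the
standard projective basis, and recording the resulting normalized tuple. -/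
noncomputable def UC {n m : ℕ} (y : Fin m → ℙ ℝ (Fin (n + 1) → ℝ)) :
    Set (Fin m → ℙ ℝ (Fin (n + 1) → ℝ)) :=
  {z | ∃ σ : Equiv.Perm (Fin m), ∃ e : (Fin (n + 1) → ℝ) ≃ₗ[ℝ] (Fin (n + 1) → ℝ),
    (∀ i, z i = projMap e (y (σ i))) ∧
    ∀ i : Fin (n + 2), ∀ h : (i : ℕ) < m, z ⟨i, h⟩ = stdProjBasis n i}


open Function

theorem Function.Injective.update_of_notMem_range {α β : Type*} [DecidableEq α] {f : α → β}
    (hf : Injective f) (j : α) {v : β} (hv : v ∉ range f) : Injective (update f j v) := by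
  have hne : ∀ a ≠ j, update f j v a ≠ v := fun a ha h =>
    hv ⟨a, by rwa [update_of_ne ha] at h⟩
  intro a b hab
  rcases eq_or_ne a j with rfl | ha <;> rcases eq_or_ne b a with rfl | hb
  · rfl
  · exact absurd (hab.symm.trans (update_self ..)) (hne b hb)
  · rfl
  · rcases eq_or_ne b j with rfl | hbj
    · exact absurd (hab.trans (update_self ..)) (hne a ha)
    · exact hf (by rwa [update_of_ne ha, update_of_ne hbj] at hab)

section Frame

variable {K V ι : Type*} [AddCommGroup V]

theorem Module.Basis.repr_ne_zero_of_linearIndependent_update [Ring K] [Nontrivial K]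
    [Module K V] [DecidableEq ι] (b : Module.Basis ι K V) {u : V} {j : ι}
    (hu : LinearIndependent K (update b j u)) :
    b.repr u j ≠ 0 := by
  intro hj
  have hmem : u ∈ Submodule.span K (b '' {j}ᶜ) := by
    rw [b.mem_span_image]
    rintro i hi rfl
    exact Finsupp.mem_support_iff.mp hi hj
  have hnot := hu.notMem_span_image (x := j) (s := {j}ᶜ) (by simp)
  rw [update_self, image_congr fun i (hi : i ∈ ({j}ᶜ : Set ι)) => update_of_ne hi u b] at hnot
  exact hnot hmem

theorem Module.Basis.exists_linearEquiv_pi_of_repr_ne_zero [Field K] [Module K V] [Fintype ι]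
    [DecidableEq ι] (b : Module.Basis ι K V) {u : V} (hu : ∀ j, b.repr u j ≠ 0) :
    ∃ e : V ≃ₗ[K] (ι → K),
      (∀ i, ∃ c : K, c • Pi.single i 1 = e (b i)) ∧ e u = fun _ => 1 := by
  set b' := b.unitsSMul fun i => Units.mk0 _ (hu i)
  refine ⟨b'.equivFun, fun i => ⟨(b.repr u i)⁻¹, ?_⟩, ?_⟩
  · ext j
    rcases eq_or_ne i j with rfl | hij <;> simp [b', Units.smul_def, *]
  · ext j
    simp [b', Units.smul_def, hu j]

end Frame

section ProjMap

variable {n : ℕ}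

theorem projMap_mk (e : (Fin (n + 1) → ℝ) ≃ₗ[ℝ] (Fin (n + 1) → ℝ)) (v : Fin (n + 1) → ℝ)
    (hv : v ≠ 0) :
    projMap e (Projectivization.mk ℝ v hv) = Projectivization.mk ℝ (e v) (by simpa) :=
  rfl

theorem projMap_eq_mk_of_smul_eq {e : (Fin (n + 1) → ℝ) ≃ₗ[ℝ] (Fin (n + 1) → ℝ)}
    {p : ℙ ℝ (Fin (n + 1) → ℝ)} {w : Fin (n + 1) → ℝ} (hw : w ≠ 0) {c : ℝ}
    (h : c • w = e p.rep) : projMap e p = Projectivization.mk ℝ w hw := by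
  rw [← p.mk_rep, projMap_mk, Projectivization.mk_eq_mk_iff']
  exact ⟨c, h⟩

theorem projMap_trans (e f : (Fin (n + 1) → ℝ) ≃ₗ[ℝ] (Fin (n + 1) → ℝ))
    (p : ℙ ℝ (Fin (n + 1) → ℝ)) : projMap (e.trans f) p = projMap f (projMap e p) := by
  induction p using Projectivization.ind with
  | h v hv => rfl

theorem projMap_symm_projMap (e : (Fin (n + 1) → ℝ) ≃ₗ[ℝ] (Fin (n + 1) → ℝ))
    (p : ℙ ℝ (Fin (n + 1) → ℝ)) : projMap e.symm (projMap e p) = p := by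
  induction p using Projectivization.ind with
  | h v hv => simp [projMap_mk]

theorem projMap_injective (e : (Fin (n + 1) → ℝ) ≃ₗ[ℝ] (Fin (n + 1) → ℝ)) :
    Injective (projMap e) :=
  Projectivization.map_injective _ _

end ProjMap

theorem stdProjBasis_castSucc (n : ℕ) (i : Fin (n + 1)) :
    stdProjBasis n i.castSucc = Projectivization.mk ℝ (Pi.single i 1) (by simp) :=
  dif_pos i.isLt

theorem stdProjBasis_last (n : ℕ) :
    stdProjBasis n (Fin.last (n + 1)) =
      Projectivization.mk ℝ (fun _ => 1) (by simp [funext_iff]) := by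
  simp [stdProjBasis]

theorem exists_projMap_eq_stdProjBasis {n : ℕ} (p : Fin (n + 2) → ℙ ℝ (Fin (n + 1) → ℝ))
    (hp : ∀ φ : Fin (n + 1) → Fin (n + 2), Injective φ →
      LinearIndependent ℝ fun i => (p (φ i)).rep) :
    ∃ e : (Fin (n + 1) → ℝ) ≃ₗ[ℝ] (Fin (n + 1) → ℝ),
      ∀ i, projMap e (p i) = stdProjBasis n i := by
  let b := basisOfLinearIndependentOfCardEqFinrank (hp _ (Fin.castSucc_injective _)) (by simp)
  have hb : ⇑b = fun i => (p i.castSucc).rep := coe_basisOfLinearIndependentOfCardEqFinrank ..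
  have hupdate : ∀ j, LinearIndependent ℝ (update b j (p (Fin.last (n + 1))).rep) := fun j => by
    have hφ := (Fin.castSucc_injective _).update_of_notMem_range j
      (v := Fin.last (n + 1)) (by simp)
    rw [hb, show (fun i => (p i.castSucc).rep) = (fun k => (p k).rep) ∘ Fin.castSucc from rfl,
      ← comp_update]
    exact hp _ hφ
  obtain ⟨e, he_basis, he_last⟩ := b.exists_linearEquiv_pi_of_repr_ne_zero fun j =>
    b.repr_ne_zero_of_linearIndependent_update (hupdate j)
  refine ⟨e, Fin.lastCases ?_ fun i => ?_⟩
  · rw [stdProjBasis_last]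
    exact projMap_eq_mk_of_smul_eq _ (c := 1) (by rw [one_smul, he_last])
  · obtain ⟨c, hc⟩ := he_basis i
    rw [stdProjBasis_castSucc]
    exact projMap_eq_mk_of_smul_eq _ (by rw [hc, hb])

theorem GenPos.linearIndependent_comp {n m : ℕ} {y : Fin m → ℙ ℝ (Fin (n + 1) → ℝ)}
    (hy : GenPos y) {φ : Fin (n + 1) → Fin m} (hφ : Injective φ) :
    LinearIndependent ℝ fun i => (y (φ i)).rep := by
  classical
  have hs : (Finset.univ.image φ).card = n + 1 := by
    rw [Finset.card_image_of_injective _ hφ, Finset.card_univ, Fintype.card_fin]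
  exact (hy _ hs).comp (fun i => ⟨φ i, Finset.mem_image_of_mem φ (Finset.mem_univ i)⟩)
    fun a b hab => hφ (congrArg Subtype.val hab)

section UC

variable {n m : ℕ}

theorem exists_projMap_comp_mem_UC (hm : n + 2 ≤ m) {y : Fin m → ℙ ℝ (Fin (n + 1) → ℝ)}
    (hy : GenPos y) : ∃ e, projMap e ∘ y ∈ UC y := by
  obtain ⟨e, he⟩ := exists_projMap_eq_stdProjBasis (y ∘ Fin.castLE hm) fun φ hφ =>
    hy.linearIndependent_comp ((Fin.castLE_injective hm).comp hφ)
  exact ⟨e, Equiv.refl _, e, fun i => rfl, fun i _ => he i⟩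

theorem UC_comp_perm (y : Fin m → ℙ ℝ (Fin (n + 1) → ℝ)) (τ : Equiv.Perm (Fin m)) :
    UC (y ∘ τ) = UC y := by
  ext z
  constructor
  · rintro ⟨σ, e, hz, hstd⟩
    exact ⟨σ.trans τ, e, hz, hstd⟩
  · rintro ⟨σ, e, hz, hstd⟩
    exact ⟨σ.trans τ.symm, e, fun i => by simp [hz], hstd⟩

theorem UC_projMap_comp (e : (Fin (n + 1) → ℝ) ≃ₗ[ℝ] (Fin (n + 1) → ℝ))
    (y : Fin m → ℙ ℝ (Fin (n + 1) → ℝ)) : UC (projMap e ∘ y) = UC y := by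
  ext z
  constructor
  · rintro ⟨σ, f, hz, hstd⟩
    exact ⟨σ, e.trans f, fun i => by rw [hz, projMap_trans]; rfl, hstd⟩
  · rintro ⟨σ, f, hz, hstd⟩
    exact ⟨σ, e.symm.trans f, fun i => by simp [hz, projMap_trans, projMap_symm_projMap], hstd⟩

end UC

theorem exists_perm_comp_eq_of_range_eq {ι α : Type*} [Finite ι] {f g : ι → α}
    (hf : Injective f) (h : range f = range g) : ∃ σ : Equiv.Perm ι, g ∘ σ = f := by
  have hg : ∀ i, ∃ j, g j = f i := fun i => (h ▸ mem_range_self i : f i ∈ range g)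
  choose τ hτ using hg
  have hτ_inj : Injective τ := fun a b hab => hf (by rw [← hτ, hab, hτ])
  exact ⟨Equiv.ofBijective τ (Finite.injective_iff_bijective.mp hτ_inj), funext hτ⟩

theorem UC_complete_invariant_general {n m : ℕ} (hm : n + 3 ≤ m)
    (y x : Fin m → ℙ ℝ (Fin (n + 1) → ℝ))
    (hy : Function.Injective y) (hygen : GenPos y) :
    UC y = UC x ↔
      ∃ e : (Fin (n + 1) → ℝ) ≃ₗ[ℝ] (Fin (n + 1) → ℝ),
        projMap e '' Set.range y = Set.range x := by
  constructor
  · intro hUC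
    obtain ⟨e, he⟩ := exists_projMap_comp_mem_UC (by omega) hygen
    obtain ⟨σ, f, hf, -⟩ := hUC ▸ he
    have hσ : projMap (e.trans f.symm) ∘ y = x ∘ σ := funext fun i => by
      rw [Function.comp_apply, projMap_trans, show projMap e (y i) = _ from hf i,
        projMap_symm_projMap, Function.comp_apply]
    exact ⟨e.trans f.symm, by rw [← range_comp, hσ, EquivLike.range_comp]⟩
  · rintro ⟨e, he⟩
    obtain ⟨τ, hτ⟩ := exists_perm_comp_eq_of_range_eq ((projMap_injective e).comp hy)
      ((range_comp _ _).trans he)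
    rw [← UC_comp_perm x τ, hτ, UC_projMap_comp]

/-- the unordered generalized cross ratio is a complete projective invariant
of unordered augmented bases: two families of `m ≥ n + 3` points in general position in
`RP^n` have the same unordered generalized cross ratio iff some projective transformation
carries one point set onto the other. -/
theorem UC_complete_invariant {n m : ℕ} (hm : n + 3 ≤ m)
    (y x : Fin m → ℙ ℝ (Fin (n + 1) → ℝ))
    (hy : Function.Injective y) (hygen : GenPos y)
    (hx : Function.Injective x) (hxgen : GenPos x) :
    UC y = UC x ↔
      ∃ e : (Fin (n + 1) → ℝ) ≃ₗ[ℝ] (Fin (n + 1) → ℝ),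
        projMap e '' Set.range y = Set.range x :=
  UC_complete_invariant_general hm y x hy hygen
end

section
/- Let E ≤ SL_8(ℝ) be the image of the map ρ(a,b,c,d,e,f,g) which is the 8×8 block unitriangular matrix [[I_4, A],[0, I_4]] with A = [[0,c,g,f],[c,b,f,e],[b,a,e,d],[a,g,d,0]]. Then for every nonidentity element x of E, rank(x − I_8) ≥ 2; i.e., E contains no element x ≠ I with rank(x − I_8) = 1, and hence E has no one-parameter subgroup of tier 1. -/
/-!
For `x = ρ(p)` the matrix `x - 1` is `[[0, A(p)], [0, 0]]`, so its rank is at least that of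
`A(p)`. If `A(p)` had rank at most one, all its `2 × 2` minors would vanish; in the order
`c, d, b, e, a, f, g` each coordinate has its square equal to a minor term containing an
already vanished coordinate, so `p = 0` and `x = 1`. Hence along a one-parameter subgroup of
`E` every `rank (φ t - 1)` is `0` or at least `2`, and the supremum cannot be `1`.
-/

open Matrix

/-- The symmetric-pattern `4 × 4` block `A(a,b,c,d,e,f,g)`, with
`(a,b,c,d,e,f,g) = (p 0, …, p 6)`. -/
def Ablock (p : Fin 7 → ℝ) : Matrix (Fin 4) (Fin 4) ℝ :=
  !![0, p 2, p 6, p 5;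
     p 2, p 1, p 5, p 4;
     p 1, p 0, p 4, p 3;
     p 0, p 6, p 3, 0]

theorem Ablock_det (p : Fin 7 → ℝ) :
    (Matrix.fromBlocks (1 : Matrix (Fin 4) (Fin 4) ℝ) (Ablock p) 0
      (1 : Matrix (Fin 4) (Fin 4) ℝ)).det = 1 := by
  simp [Matrix.det_fromBlocks_zero₂₁]

/-- The map `ρ : ℝ⁷ → SL₈(ℝ)` (coordinates indexed by `Fin 4 ⊕ Fin 4`), whose image is
the abelian group `E`. -/
def rhoE (p : Fin 7 → ℝ) : Matrix.SpecialLinearGroup (Fin 4 ⊕ Fin 4) ℝ :=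
  ⟨Matrix.fromBlocks (1 : Matrix (Fin 4) (Fin 4) ℝ) (Ablock p) 0
      (1 : Matrix (Fin 4) (Fin 4) ℝ), Ablock_det p⟩

theorem Matrix.le_rank_of_det_submatrix_ne_zero {m n K : Type*} [Fintype n] [Field K]
    {k : ℕ} (M : Matrix m n K) (r : Fin k → m) (c : Fin k → n)
    (h : (M.submatrix r c).det ≠ 0) : k ≤ M.rank := by
  have hunit : IsUnit (M.submatrix r c) := (isUnit_iff_isUnit_det _).mpr h.isUnit
  simpa [rank_of_isUnit _ hunit] using M.rank_submatrix_le r c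

theorem Matrix.two_le_rank_of_mul_sub_mul_ne_zero {m n K : Type*} [Fintype n] [Field K]
    (M : Matrix m n K) (i₁ i₂ : m) (j₁ j₂ : n)
    (h : M i₁ j₁ * M i₂ j₂ - M i₁ j₂ * M i₂ j₁ ≠ 0) : 2 ≤ M.rank :=
  M.le_rank_of_det_submatrix_ne_zero ![i₁, i₂] ![j₁, j₂] (by rw [det_fin_two]; simpa using h)

theorem two_le_rank_Ablock {p : Fin 7 → ℝ} (hp : p ≠ 0) : 2 ≤ (Ablock p).rank := by
  by_contra hrank
  have minor (i₁ i₂ j₁ j₂ : Fin 4) :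
      Ablock p i₁ j₁ * Ablock p i₂ j₂ = Ablock p i₁ j₂ * Ablock p i₂ j₁ := by
    by_contra h
    exact hrank ((Ablock p).two_le_rank_of_mul_sub_mul_ne_zero i₁ i₂ j₁ j₂ (sub_ne_zero.mpr h))
  have m2 : 0 * p 1 = p 2 * p 2 := minor 0 1 0 1
  have m3 : p 4 * 0 = p 3 * p 3 := minor 2 3 2 3
  have m1 : p 2 * p 0 = p 1 * p 1 := minor 1 2 0 1
  have m4 : p 5 * p 3 = p 4 * p 4 := minor 1 2 2 3
  have m0 : p 1 * p 6 = p 0 * p 0 := minor 2 3 0 1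
  have m5 : p 6 * p 4 = p 5 * p 5 := minor 0 1 2 3
  have m6 : p 2 * p 3 = p 6 * p 6 := minor 0 3 1 2
  have h2 : p 2 = 0 := mul_self_eq_zero.mp (by rw [← m2, zero_mul])
  have h3 : p 3 = 0 := mul_self_eq_zero.mp (by rw [← m3, mul_zero])
  have h1 : p 1 = 0 := mul_self_eq_zero.mp (by rw [← m1, h2, zero_mul])
  have h4 : p 4 = 0 := mul_self_eq_zero.mp (by rw [← m4, h3, mul_zero])
  have h0 : p 0 = 0 := mul_self_eq_zero.mp (by rw [← m0, h1, zero_mul])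
  have h5 : p 5 = 0 := mul_self_eq_zero.mp (by rw [← m5, h4, mul_zero])
  have h6 : p 6 = 0 := mul_self_eq_zero.mp (by rw [← m6, h2, zero_mul])
  exact hp (funext fun i => by fin_cases i <;> assumption)

theorem Ablock_zero : Ablock 0 = 0 := by
  ext i j
  fin_cases i <;> fin_cases j <;> rfl

theorem rhoE_zero : rhoE 0 = 1 :=
  Subtype.ext (by simp [rhoE, Ablock_zero, fromBlocks_one])

theorem submatrix_rhoE_sub_one (p : Fin 7 → ℝ) :
    ((rhoE p : Matrix (Fin 4 ⊕ Fin 4) (Fin 4 ⊕ Fin 4) ℝ) - 1).submatrix Sum.inl Sum.inr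
      = Ablock p := by
  ext i j
  simp [rhoE]

theorem ENat.iSup_natCast_ne_one {ι : Type*} (f : ι → ℕ) (hf : ∀ i, f i ≠ 1) :
    ⨆ i, (f i : ℕ∞) ≠ 1 := by
  intro hsup
  have hzero (i : ι) : f i = 0 := by
    have : (f i : ℕ∞) ≤ 1 := hsup ▸ le_iSup (fun i => (f i : ℕ∞)) i
    have := hf i
    norm_cast at *
    omega
  simp [hzero] at hsup

theorem two_le_rank_rhoE_sub_one {p : Fin 7 → ℝ} (hp : rhoE p ≠ 1) :
    2 ≤ ((rhoE p : Matrix (Fin 4 ⊕ Fin 4) (Fin 4 ⊕ Fin 4) ℝ) - 1).rank := by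
  have hp0 : p ≠ 0 := by
    rintro rfl
    exact hp rhoE_zero
  calc 2 ≤ (Ablock p).rank := two_le_rank_Ablock hp0
    _ ≤ _ := submatrix_rhoE_sub_one p ▸ rank_submatrix_le _ _ _

/-- every nonidentity element `x` of `E = im ρ` has `rank (x − I₈) ≥ 2`;
in particular `E` has no one-parameter subgroup of tier 1. -/
theorem E_no_tier_one :
    (∀ p : Fin 7 → ℝ, rhoE p ≠ 1 →
      2 ≤ ((rhoE p : Matrix (Fin 4 ⊕ Fin 4) (Fin 4 ⊕ Fin 4) ℝ) - 1).rank) ∧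
    ¬ ∃ φ : Multiplicative ℝ →* Matrix.SpecialLinearGroup (Fin 4 ⊕ Fin 4) ℝ,
        Set.range φ ⊆ Set.range rhoE ∧
        (⨆ t : Multiplicative ℝ,
          (((φ t : Matrix (Fin 4 ⊕ Fin 4) (Fin 4 ⊕ Fin 4) ℝ) - 1).rank : ℕ∞)) = 1 := by
  refine ⟨fun p => two_le_rank_rhoE_sub_one, ?_⟩
  rintro ⟨φ, hφE, hsup⟩
  refine ENat.iSup_natCast_ne_one _ (fun t => ?_) hsup
  obtain ⟨p, hp⟩ := hφE ⟨t, rfl⟩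
  rw [← hp]
  by_cases h1 : rhoE p = 1
  · simp [h1]
  · have := two_le_rank_rhoE_sub_one h1
    omega
end

section
/- The image M_5 of the map μ_5(a,b,c,d) ∈ SL_5(ℝ), with identity diagonal and nonzero entries a in (1,2), a²/2 in (1,4), b in (1,5), a in (2,4), c in (3,4), d in (3,5), is an abelian subgroup of SL_5(ℝ) of dimension 4 isomorphic to (ℝ⁴, +), and M_5 is not a flat group: it is not equal to the intersection of SL_5(ℝ) with any affine subspace of the 5×5 matrices. -/
open Matrix

/-- The map `μ₅ : ℝ⁴ → SL₅(ℝ)` (valued in matrices), with `(a,b,c,d) = (p 0, p 1, p 2, p 3)`: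
identity diagonal and nonzero entries `a` at `(1,2)`, `a²/2` at `(1,4)`, `b` at `(1,5)`,
`a` at `(2,4)`, `c` at `(3,4)`, `d` at `(3,5)`. -/
noncomputable def mu5 (p : Fin 4 → ℝ) : Matrix (Fin 5) (Fin 5) ℝ :=
  !![1, p 0, 0, p 0 ^ 2 / 2, p 1;
     0, 1, 0, p 0, 0;
     0, 0, 1, p 2, p 3;
     0, 0, 0, 1, 0;
     0, 0, 0, 0, 1]

/-! The image of `μ₅` is not flat because flatness is a linear condition cut by `det = 1`:
a flat group contains every matrix of determinant one in its linear span. The matrix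
`2 μ₅(1,0,0,0) - 1` is upper unitriangular, so it has determinant one, but its `(1,2)` entry
is `2` while its `(1,4)` entry is `1 ≠ 2² / 2`; the quadratic entry of `μ₅` cannot be matched. -/

section Flat

variable {n R : Type*} [Fintype n] [DecidableEq n] [CommRing R]

def Matrix.IsFlat (L : Set (Matrix n n R)) : Prop :=
  ∃ V : Submodule R (Matrix n n R), L = (V : Set (Matrix n n R)) ∩ {A | A.det = 1}

theorem Matrix.IsFlat.mem_of_mem_span {L : Set (Matrix n n R)} (hL : IsFlat L)
    {A : Matrix n n R} (hA : A ∈ Submodule.span R L) (hdet : A.det = 1) : A ∈ L := by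
  obtain ⟨V, rfl⟩ := hL
  exact ⟨Submodule.span_le.2 Set.inter_subset_left hA, hdet⟩

theorem Matrix.IsUpperTriangular.det_eq_one [LinearOrder n] {M : Matrix n n R}
    (h : M.IsUpperTriangular) (hdiag : ∀ i, M i i = 1) : M.det = 1 := by
  simp [det_of_isUpperTriangular h, hdiag]

end Flat

theorem mu5_isUpperTriangular (p : Fin 4 → ℝ) : (mu5 p).IsUpperTriangular := by
  intro i j hij
  fin_cases i <;> fin_cases j <;> simp_all [mu5]

theorem mu5_diag (p : Fin 4 → ℝ) (i : Fin 5) : mu5 p i i = 1 := by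
  fin_cases i <;> simp [mu5]

theorem det_mu5 (p : Fin 4 → ℝ) : (mu5 p).det = 1 :=
  (mu5_isUpperTriangular p).det_eq_one (mu5_diag p)

theorem mu5_zero : mu5 0 = 1 := by
  ext i j
  fin_cases i <;> fin_cases j <;> simp [mu5]

theorem mu5_add (p q : Fin 4 → ℝ) : mu5 (p + q) = mu5 p * mu5 q := by
  ext i j
  fin_cases i <;> fin_cases j <;>
    simp [mu5, mul_apply, Fin.sum_univ_five] <;> ring

theorem mu5_injective : Function.Injective mu5 := by
  intro p q h
  have entry (i j : Fin 5) : mu5 p i j = mu5 q i j := by rw [h]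
  funext k
  fin_cases k
  · simpa [mu5] using entry 0 1
  · simpa [mu5] using entry 0 4
  · simpa [mu5] using entry 2 3
  · simpa [mu5] using entry 2 4

theorem not_isFlat_range_mu5 : ¬ IsFlat (Set.range mu5) := by
  intro hflat
  set W : Matrix (Fin 5) (Fin 5) ℝ := (2 : ℝ) • mu5 (Pi.single 0 1) - 1
  have hspan : W ∈ Submodule.span ℝ (Set.range mu5) :=
    sub_mem (Submodule.smul_mem _ _ (Submodule.subset_span ⟨_, rfl⟩))
      (Submodule.subset_span ⟨0, mu5_zero⟩)
  have hupper : W.IsUpperTriangular := fun i j hij => by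
    simp [W, mu5_isUpperTriangular _ hij, blockTriangular_one hij]
  have hdet : W.det = 1 := hupper.det_eq_one fun i => by norm_num [W, mu5_diag]
  obtain ⟨q, hq⟩ := hflat.mem_of_mem_span hspan hdet
  have ha : q 0 = 2 := by simpa [W, mu5] using congr_fun₂ hq 0 1
  have ha_sq : q 0 ^ 2 / 2 = 1 := by simpa [W, mu5] using congr_fun₂ hq 0 3
  rw [ha] at ha_sq
  norm_num at ha_sq

/-- `M₅ = im μ₅` is an abelian subgroup of `SL₅(ℝ)` of dimension 4,
isomorphic to `(ℝ⁴, +)` (μ₅ is an injective homomorphism landing in `SL₅(ℝ)` with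
commuting image), and `M₅` is not flat: it is not the intersection of `SL₅(ℝ)` with any
linear subspace of the `5 × 5` matrices. -/
theorem M5_abelian_not_flat :
    (∀ p : Fin 4 → ℝ, (mu5 p).det = 1) ∧
    (∀ p q : Fin 4 → ℝ, mu5 (p + q) = mu5 p * mu5 q) ∧
    Function.Injective mu5 ∧
    (∀ p q : Fin 4 → ℝ, mu5 p * mu5 q = mu5 q * mu5 p) ∧
    ¬ ∃ V : Submodule ℝ (Matrix (Fin 5) (Fin 5) ℝ),
        Set.range mu5 = (V : Set (Matrix (Fin 5) (Fin 5) ℝ)) ∩ {A | A.det = 1} :=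
  ⟨det_mu5, mu5_add, mu5_injective,
    fun p q => by rw [← mu5_add, ← mu5_add, add_comm], not_isFlat_range_mu5⟩
end
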